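/- Let X be a nonempty finite set, D a probability distribution on X, G a growth function assigning to each function h : X → [0,1] a family G(h) of functions from X to [-1,1], δ > 0, and g : X → [0,1]. Then there exist a natural number k < 2/δ^2 and functions f_1, ..., f_k : X → [-1,1] such that, defining h_0 = 0 and h_j(x) = min(1, max(0, (δ/2)·(f_1(x) + ... + f_j(x)))) for 1 ≤ j ≤ k, each f_j is either a member of G(h_{j−1}) or the pointwise negation of a member of G(h_{j−1}), and h_k is a (G(h_k), δ)-regular simulator for g under D, i.e., |E_{x∼D}[f(x)·(g(x) − h_k(x))]| ≤ δ for every f ∈ G(h_k). -/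
import Mathlib

noncomputable def sclamp (t : ℝ) : ℝ := min 1 (max 0 t)

noncomputable def sphi (g s : ℝ) : ℝ :=
  (g - sclamp s)^2 + 2 * max 0 (-s) * g + 2 * max 0 (s-1) * (1-g)

lemma sphi_nonneg {g : ℝ} (hg0 : 0 ≤ g) (hg1 : g ≤ 1) (s : ℝ) : 0 ≤ sphi g s := by
  have h1 : (0:ℝ) ≤ max 0 (-s) := le_max_left _ _
  have h2 : (0:ℝ) ≤ max 0 (s-1) := le_max_left _ _
  have h3 : (0:ℝ) ≤ 1 - g := by linarith
  unfold sphi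
  positivity

lemma sphi_zero (g : ℝ) : sphi g 0 = g^2 := by
  simp [sphi, sclamp]

lemma strich (s : ℝ) :
    (s ≤ 0 ∧ sclamp s = 0 ∧ max 0 (-s) = -s ∧ max 0 (s-1) = 0) ∨
    (0 ≤ s ∧ s ≤ 1 ∧ sclamp s = s ∧ max 0 (-s) = 0 ∧ max 0 (s-1) = 0) ∨
    (1 ≤ s ∧ sclamp s = 1 ∧ max 0 (-s) = 0 ∧ max 0 (s-1) = s-1) := by
  rcases le_total s 0 with h | h
  · left
    refine ⟨h, ?_, max_eq_right (by linarith), max_eq_left (by linarith)⟩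
    unfold sclamp
    rw [max_eq_left h, min_eq_right zero_le_one]
  · rcases le_total s 1 with h2 | h2
    · right; left
      refine ⟨h, h2, ?_, max_eq_left (by linarith), max_eq_left (by linarith)⟩
      unfold sclamp
      rw [max_eq_right h, min_eq_right h2]
    · right; right
      refine ⟨h2, ?_, max_eq_left (by linarith), max_eq_right (by linarith)⟩
      unfold sclamp
      rw [max_eq_right h, min_eq_left h2]

set_option maxHeartbeats 1000000 in
lemma sphi_step (g s a : ℝ) : sphi g (s + a) ≤ sphi g s - 2*a*(g - sclamp s) + a^2 := by
  unfold sphi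
  rcases strich s with ⟨h1, e1, e2, e3⟩ | ⟨h1, h1', e1, e2, e3⟩ | ⟨h1, e1, e2, e3⟩ <;>
    rcases strich (s+a) with ⟨k1, f1, f2, f3⟩ | ⟨k1, k1', f1, f2, f3⟩ | ⟨k1, f1, f2, f3⟩ <;>
    rw [e1, e2, e3, f1, f2, f3] <;>
    nlinarith [sq_nonneg a, sq_nonneg (g - s), sq_nonneg (s+a-1), sq_nonneg (s+a),
      sq_nonneg (g-1), sq_nonneg g, sq_nonneg (g-s-a), sq_nonneg (s-1), sq_nonneg s]

open Classical in
noncomputable def pickF {X : Type*} [Fintype X] (D : X → ℝ) (G : (X → ℝ) → Set (X → ℝ))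
    (δ : ℝ) (g : X → ℝ) (h : X → ℝ) : X → ℝ :=
  if hb : ∃ φ ∈ G h, δ < |∑ x, D x * (φ x * (g x - h x))| then
    (if 0 ≤ ∑ x, D x * (hb.choose x * (g x - h x)) then hb.choose
     else fun x => -(hb.choose x))
  else fun _ => 0

lemma pickF_spec {X : Type*} [Fintype X] (D : X → ℝ) (G : (X → ℝ) → Set (X → ℝ))
    (δ : ℝ) (g : X → ℝ) (h : X → ℝ)
    (hGh : ∀ f ∈ G h, ∀ x, f x ∈ Set.Icc (-1 : ℝ) 1)
    (hb : ∃ φ ∈ G h, δ < |∑ x, D x * (φ x * (g x - h x))|) :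
    (pickF D G δ g h ∈ G h ∨ (fun x => -(pickF D G δ g h x)) ∈ G h) ∧
    δ < ∑ x, D x * (pickF D G δ g h x * (g x - h x)) ∧
    ∀ x, pickF D G δ g h x ∈ Set.Icc (-1 : ℝ) 1 := by
  classical
  obtain ⟨hmem, hgt⟩ := hb.choose_spec
  unfold pickF
  rw [dif_pos hb]
  split_ifs with hE
  · refine ⟨Or.inl hmem, ?_, hGh _ hmem⟩
    rwa [abs_of_nonneg hE] at hgt
  · push_neg at hE
    constructor
    · right
      have : (fun x => -(-(hb.choose x))) = hb.choose := by funext x; ring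
      rw [this]; exact hmem
    constructor
    · have hsum : ∑ x, D x * (-(hb.choose x) * (g x - h x))
          = -∑ x, D x * (hb.choose x * (g x - h x)) := by
        rw [← Finset.sum_neg_distrib]
        exact Finset.sum_congr rfl fun x _ => by ring
      rw [hsum]
      rwa [abs_of_neg hE] at hgt
    · intro x
      have := hGh _ hmem x
      simp only [Set.mem_Icc] at this ⊢
      exact ⟨by linarith [this.2], by linarith [this.1]⟩

noncomputable def sSum {X : Type*} [Fintype X] (D : X → ℝ) (G : (X → ℝ) → Set (X → ℝ))
    (δ : ℝ) (g : X → ℝ) : ℕ → X → ℝ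
  | 0 => fun _ => 0
  | n+1 => fun x => sSum D G δ g n x +
      pickF D G δ g (fun y => sclamp (δ / 2 * sSum D G δ g n y)) x

theorem stmt_3 {X : Type*} [Fintype X] [Nonempty X]
    (D : X → ℝ) (hD0 : ∀ x, 0 ≤ D x) (hD1 : ∑ x, D x = 1)
    (G : (X → ℝ) → Set (X → ℝ))
    (hG : ∀ h, ∀ f ∈ G h, ∀ x, f x ∈ Set.Icc (-1 : ℝ) 1)
    (δ : ℝ) (hδ : 0 < δ)
    (g : X → ℝ) (hg : ∀ x, g x ∈ Set.Icc (0 : ℝ) 1) :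
    ∃ (k : ℕ) (f : ℕ → X → ℝ) (h : ℕ → X → ℝ),
      (k : ℝ) < 2 / δ ^ 2 ∧
      (∀ j x, h j x = min 1 (max 0 ((δ / 2) * ∑ i ∈ Finset.range j, f i x))) ∧
      (∀ j < k, f j ∈ G (h j) ∨ (fun x => -(f j x)) ∈ G (h j)) ∧
      ∀ φ ∈ G (h k), |∑ x, D x * (φ x * (g x - h k x))| ≤ δ := by
  classical
  set S : ℕ → X → ℝ := sSum D G δ g with hS
  set h : ℕ → X → ℝ := fun j y => sclamp (δ / 2 * S j y) with hh
  set f : ℕ → X → ℝ := fun j => pickF D G δ g (h j) with hf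
  have hSsucc : ∀ n x, S (n+1) x = S n x + f n x := fun n x => rfl
  have hsum : ∀ j x, S j x = ∑ i ∈ Finset.range j, f i x := by
    intro j
    induction j with
    | zero => intro x; simp [hS, sSum]
    | succ n ih =>
        intro x
        rw [hSsucc, Finset.sum_range_succ, ih]
  set Bad : ℕ → Prop := fun n => ∃ φ ∈ G (h n), δ < |∑ x, D x * (φ x * (g x - h n x))|
    with hBad
  have key : ∀ n, Bad n →
      (f n ∈ G (h n) ∨ (fun x => -(f n x)) ∈ G (h n)) ∧
      δ < ∑ x, D x * (f n x * (g x - h n x)) ∧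
      ∀ x, f n x ∈ Set.Icc (-1 : ℝ) 1 := by
    intro n hb
    exact pickF_spec D G δ g (h n) (hG (h n)) hb
  set Φ : ℕ → ℝ := fun n => ∑ x, D x * sphi (g x) (δ / 2 * S n x) with hΦ
  have Φnonneg : ∀ n, 0 ≤ Φ n := by
    intro n
    apply Finset.sum_nonneg
    intro x _
    exact mul_nonneg (hD0 x) (sphi_nonneg (hg x).1 (hg x).2 _)
  have step : ∀ n, Bad n → Φ (n+1) ≤ Φ n - 3/4 * δ^2 := by
    intro n hb
    obtain ⟨_, hgt, hbound⟩ := key n hb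
    have p1 : ∀ x, D x * sphi (g x) (δ / 2 * S (n+1) x)
        ≤ D x * sphi (g x) (δ / 2 * S n x)
          - δ * (D x * (f n x * (g x - h n x))) + δ^2/4 * (D x * (f n x)^2) := by
      intro x
      have hx : δ / 2 * S (n+1) x = δ / 2 * S n x + δ / 2 * f n x := by
        rw [hSsucc]; ring
      have hstep := sphi_step (g x) (δ / 2 * S n x) (δ / 2 * f n x)
      have hmul := mul_le_mul_of_nonneg_left hstep (hD0 x)
      have hhx : h n x = sclamp (δ / 2 * S n x) := rfl
      rw [hx]
      calc D x * sphi (g x) (δ / 2 * S n x + δ / 2 * f n x)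
          ≤ D x * (sphi (g x) (δ / 2 * S n x)
              - 2 * (δ / 2 * f n x) * (g x - sclamp (δ / 2 * S n x))
              + (δ / 2 * f n x)^2) := hmul
        _ = D x * sphi (g x) (δ / 2 * S n x)
              - δ * (D x * (f n x * (g x - h n x))) + δ^2/4 * (D x * (f n x)^2) := by
            rw [hhx]; ring
    have p2 : Φ (n+1) ≤ Φ n - δ * ∑ x, D x * (f n x * (g x - h n x))
        + δ^2/4 * ∑ x, D x * (f n x)^2 := by
      calc Φ (n+1) ≤ ∑ x, (D x * sphi (g x) (δ / 2 * S n x)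
            - δ * (D x * (f n x * (g x - h n x))) + δ^2/4 * (D x * (f n x)^2)) :=
          Finset.sum_le_sum fun x _ => p1 x
        _ = Φ n - δ * ∑ x, D x * (f n x * (g x - h n x))
            + δ^2/4 * ∑ x, D x * (f n x)^2 := by
          rw [Finset.sum_add_distrib, Finset.sum_sub_distrib, ← Finset.mul_sum,
            ← Finset.mul_sum]
    have p3 : ∑ x, D x * (f n x)^2 ≤ 1 := by
      rw [← hD1]
      refine Finset.sum_le_sum fun x _ => ?_
      have h1 := (hbound x).1
      have h2 := (hbound x).2
      nlinarith [hD0 x, mul_nonneg (hD0 x) (by nlinarith : (0:ℝ) ≤ 1 - f n x ^ 2)]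
    nlinarith [p2, p3, hgt, hδ, sq_nonneg δ]
  have Φind : ∀ n, (∀ j < n, Bad j) → Φ n ≤ 1 - n * (3/4 * δ^2) := by
    intro n
    induction n with
    | zero =>
        intro _
        have : Φ 0 = ∑ x, D x * (g x)^2 := by
          apply Finset.sum_congr rfl
          intro x _
          have : δ / 2 * S 0 x = 0 := by simp [hS, sSum]
          rw [this, sphi_zero]
        rw [this]
        simp only [Nat.cast_zero, zero_mul, sub_zero]
        rw [← hD1]
        refine Finset.sum_le_sum fun x _ => ?_
        have h1 := (hg x).1
        have h2 := (hg x).2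
        nlinarith [hD0 x, mul_nonneg (hD0 x) (by nlinarith : (0:ℝ) ≤ 1 - g x ^ 2)]
    | succ n ih =>
        intro hall
        have h1 := step n (hall n (Nat.lt_succ_self n))
        have h2 := ih fun j hj => hall j (hj.trans (Nat.lt_succ_self n))
        push_cast
        linarith
  have hex : ∃ n, ¬ Bad n := by
    by_contra hc
    push_neg at hc
    obtain ⟨n, hn⟩ := exists_nat_gt (4 / (3 * δ^2))
    have h1 := Φind n fun j _ => hc j
    have h2 := Φnonneg n
    have h3 : (0:ℝ) < 3 * δ^2 := by positivity
    rw [div_lt_iff₀ h3] at hn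
    nlinarith
  set k := Nat.find hex with hk
  have hkspec : ¬ Bad k := Nat.find_spec hex
  have hkmin : ∀ j < k, Bad j := fun j hj => not_not.mp (Nat.find_min hex hj)
  refine ⟨k, f, h, ?_, ?_, ?_, ?_⟩
  · have h1 := Φind k hkmin
    have h2 := Φnonneg k
    rw [lt_div_iff₀ (by positivity : (0:ℝ) < δ^2)]
    nlinarith
  · intro j x
    rw [hh]
    simp only [sclamp]
    rw [hsum]
  · intro j hj
    exact (key j (hkmin j hj)).1
  · intro φ hφ
    by_contra hcon
    push_neg at hcon
    exact hkspec ⟨φ, hφ, hcon⟩
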